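/- Let α > 0. The function φ(x) = x·α / ((1 + (αx)²)·(π/2 − arctan(αx))) is strictly increasing on (0,∞). -/

import Mathlib

/-! Substituting `t = αx` gives `φ(x) = g(αx)` with `g(t) = t / ((1 + t²)(π/2 − arctan t))`, so it
suffices that `g` increases on `(0, ∞)`. The numerator of `g'` is `(1 − t²)(π/2 − arctan t) + t`,
obviously positive for `t ≤ 1`; for `t > 1` the bound `π/2 − arctan t = arctan t⁻¹ < t⁻¹` shows
that it exceeds `t⁻¹`. -/

open Real Set

namespace Real

theorem arctan_lt_self {x : ℝ} (hx : 0 < x) : arctan x < x := by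
  simpa only [tan_arctan] using lt_tan (arctan_pos.mpr hx) (arctan_lt_pi_div_two x)

theorem pi_div_two_sub_arctan_pos (t : ℝ) : 0 < π / 2 - arctan t :=
  sub_pos.mpr (arctan_lt_pi_div_two t)

theorem pi_div_two_sub_arctan_lt_inv {t : ℝ} (ht : 0 < t) : π / 2 - arctan t < t⁻¹ := by
  rw [← arctan_inv_of_pos ht]
  exact arctan_lt_self (inv_pos.mpr ht)

end Real

/-- `x · h₀(x)` for `α = 1`. -/
noncomputable def halfCauchyXHazard (t : ℝ) : ℝ :=
  t / ((1 + t ^ 2) * (π / 2 - arctan t))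

theorem hasDerivAt_halfCauchyXHazard (t : ℝ) :
    HasDerivAt halfCauchyXHazard
      (((1 - t ^ 2) * (π / 2 - arctan t) + t) / ((1 + t ^ 2) * (π / 2 - arctan t)) ^ 2) t := by
  have hsq : 0 < 1 + t ^ 2 := by positivity
  have hden : HasDerivAt (fun t => (1 + t ^ 2) * (π / 2 - arctan t))
      (2 * t * (π / 2 - arctan t) - 1) t := by
    refine (((hasDerivAt_pow 2 t).const_add 1).fun_mul
      ((hasDerivAt_arctan t).const_sub (π / 2))).congr_deriv ?_
    field_simp
    ring
  refine ((hasDerivAt_id t).fun_div hden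
    (mul_pos hsq (pi_div_two_sub_arctan_pos t)).ne').congr_deriv ?_
  simp only [id]
  ring

theorem halfCauchyXHazard_deriv_numerator_pos {t : ℝ} (ht : 0 < t) :
    0 < (1 - t ^ 2) * (π / 2 - arctan t) + t := by
  have hA := pi_div_two_sub_arctan_pos t
  rcases le_or_gt t 1 with hle | hgt
  · have : 0 ≤ 1 - t ^ 2 := by nlinarith
    nlinarith [mul_nonneg this hA.le]
  · calc 0 < t⁻¹ := inv_pos.mpr ht
      _ = (1 - t ^ 2) * t⁻¹ + t := by field_simp; ring
      _ < (1 - t ^ 2) * (π / 2 - arctan t) + t := by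
        gcongr ?_ + t
        exact mul_lt_mul_of_neg_left (pi_div_two_sub_arctan_lt_inv ht) (by nlinarith)

theorem strictMonoOn_halfCauchyXHazard : StrictMonoOn halfCauchyXHazard (Ioi 0) := by
  refine strictMonoOn_of_deriv_pos (convex_Ioi 0)
    (fun t _ => (hasDerivAt_halfCauchyXHazard t).continuousAt.continuousWithinAt) fun t ht => ?_
  rw [interior_Ioi] at ht
  rw [(hasDerivAt_halfCauchyXHazard t).deriv]
  have hden : 0 < (1 + t ^ 2) * (π / 2 - arctan t) :=
    mul_pos (by positivity) (pi_div_two_sub_arctan_pos t)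
  exact div_pos (halfCauchyXHazard_deriv_numerator_pos ht) (pow_pos hden 2)

theorem halfCauchy_x_mul_hazard_strictMono (α : ℝ) (hα : 0 < α) :
    StrictMonoOn
      (fun x : ℝ => x * α / ((1 + (α * x) ^ 2) * (Real.pi / 2 - Real.arctan (α * x))))
      (Set.Ioi (0:ℝ)) := by
  have hφ : (fun x : ℝ => x * α / ((1 + (α * x) ^ 2) * (Real.pi / 2 - Real.arctan (α * x)))) =
      halfCauchyXHazard ∘ (α * ·) := by
    funext x
    simp only [Function.comp, halfCauchyXHazard, mul_comm x α]
  rw [hφ]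
  exact strictMonoOn_halfCauchyXHazard.comp ((strictMono_mul_left_of_pos hα).strictMonoOn _)
    fun _ hx => mul_pos hα hx
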